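/- arXiv:1312.2809 — 6 statements merged into one kernel-verified Lean document; each statement's English description precedes it below -/
import Mathlib

section
/- For all α ∈ (0,1/2), β = 1−α, and z ∈ (0,1), one has S_α(z) · S_β(z) ≥ (3/2) · S_{α,β}(z), where S_α(z) = Σ_{n≥1} n²/((n²−α²z²)(n²−z²)), S_β(z) = Σ_{n≥1} n²/((n²−β²z²)(n²−z²)), and S_{α,β}(z) = Σ_{n≥1} n²/((n²−α²z²)(n²−β²z²)(n²−z²)). -/
open Real

set_option maxHeartbeats 1000000 in
theorem stable_series_inequality (α z : ℝ) (hα : α ∈ Set.Ioo (0:ℝ) (1/2))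
    (hz : z ∈ Set.Ioo (0:ℝ) 1) :
    (∑' n : ℕ, ((n + 1 : ℝ) ^ 2) /
        (((n + 1 : ℝ) ^ 2 - α ^ 2 * z ^ 2) * ((n + 1 : ℝ) ^ 2 - z ^ 2))) *
      (∑' n : ℕ, ((n + 1 : ℝ) ^ 2) /
        (((n + 1 : ℝ) ^ 2 - (1 - α) ^ 2 * z ^ 2) * ((n + 1 : ℝ) ^ 2 - z ^ 2))) ≥
    (3 / 2) *
      ∑' n : ℕ, ((n + 1 : ℝ) ^ 2) /
        (((n + 1 : ℝ) ^ 2 - α ^ 2 * z ^ 2) * ((n + 1 : ℝ) ^ 2 - (1 - α) ^ 2 * z ^ 2) *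
          ((n + 1 : ℝ) ^ 2 - z ^ 2)) := by
  obtain ⟨hα0, hα2⟩ := hα
  obtain ⟨hz0, hz1⟩ := hz
  set f : ℕ → ℝ := fun n => ((n + 1 : ℝ) ^ 2) /
      (((n + 1 : ℝ) ^ 2 - α ^ 2 * z ^ 2) * ((n + 1 : ℝ) ^ 2 - z ^ 2)) with hfdef
  set g : ℕ → ℝ := fun n => ((n + 1 : ℝ) ^ 2) /
      (((n + 1 : ℝ) ^ 2 - (1 - α) ^ 2 * z ^ 2) * ((n + 1 : ℝ) ^ 2 - z ^ 2)) with hgdef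
  set h : ℕ → ℝ := fun n => ((n + 1 : ℝ) ^ 2) /
      (((n + 1 : ℝ) ^ 2 - α ^ 2 * z ^ 2) * ((n + 1 : ℝ) ^ 2 - (1 - α) ^ 2 * z ^ 2) *
        ((n + 1 : ℝ) ^ 2 - z ^ 2)) with hhdef
  -- basic scalar bounds
  have hz2 : z ^ 2 < 1 := by nlinarith
  have hz2p : 0 < z ^ 2 := by positivity
  have hA2 : 0 < α ^ 2 * z ^ 2 := by positivity
  have hA2' : α ^ 2 * z ^ 2 < 1 / 4 := by nlinarith
  have hB2 : 0 < (1 - α) ^ 2 * z ^ 2 := by nlinarith [sq_nonneg (1 - α)]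
  have hB2' : (1 - α) ^ 2 * z ^ 2 < 1 := by nlinarith
  have hden1 : (0:ℝ) < 1 - α ^ 2 * z ^ 2 := by linarith
  have hden2 : (0:ℝ) < 1 - (1 - α) ^ 2 * z ^ 2 := by linarith
  have hden3 : (0:ℝ) < 1 - z ^ 2 := by linarith
  -- per-index facts
  have hx : ∀ n : ℕ, (1 : ℝ) ≤ (n + 1 : ℝ) := fun n => by
    have := n.cast_nonneg (α := ℝ); linarith
  have hxsq : ∀ n : ℕ, (1 : ℝ) ≤ (n + 1 : ℝ) ^ 2 := fun n => by
    have := hx n; nlinarith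
  have hxp : ∀ n : ℕ, (0 : ℝ) < (n + 1 : ℝ) ^ 2 := fun n => by positivity
  have hd1 : ∀ n : ℕ, (3 : ℝ) / 4 ≤ ((n + 1 : ℝ) ^ 2 - α ^ 2 * z ^ 2) := fun n => by
    have := hxsq n; nlinarith
  have hd2 : ∀ n : ℕ, 0 < ((n + 1 : ℝ) ^ 2 - (1 - α) ^ 2 * z ^ 2) := fun n => by
    have := hxsq n; nlinarith
  have hd3 : ∀ n : ℕ, 0 < ((n + 1 : ℝ) ^ 2 - z ^ 2) := fun n => by
    have := hxsq n; nlinarith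
  have hd1p : ∀ n : ℕ, 0 < ((n + 1 : ℝ) ^ 2 - α ^ 2 * z ^ 2) := fun n => by
    have := hd1 n; linarith
  have hfpos : ∀ n : ℕ, 0 < f n := fun n =>
    div_pos (hxp n) (mul_pos (hd1p n) (hd3 n))
  have hgpos : ∀ n : ℕ, 0 < g n := fun n =>
    div_pos (hxp n) (mul_pos (hd2 n) (hd3 n))
  have hhpos : ∀ n : ℕ, 0 < h n := fun n =>
    div_pos (hxp n) (mul_pos (mul_pos (hd1p n) (hd2 n)) (hd3 n))
  -- lower bounds on denominators proportional to (n+1)^2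
  have hb3 : ∀ n : ℕ, (1 - z ^ 2) * (n + 1 : ℝ) ^ 2 ≤ ((n + 1 : ℝ) ^ 2 - z ^ 2) := fun n => by
    nlinarith [mul_nonneg hz2p.le (by linarith [hxsq n] : (0:ℝ) ≤ (n + 1 : ℝ) ^ 2 - 1)]
  have hb1 : ∀ n : ℕ, (3 / 4 : ℝ) * (n + 1 : ℝ) ^ 2 ≤ ((n + 1 : ℝ) ^ 2 - α ^ 2 * z ^ 2) :=
    fun n => by nlinarith [hxsq n]
  have hb2 : ∀ n : ℕ, (1 - (1 - α) ^ 2 * z ^ 2) * (n + 1 : ℝ) ^ 2 ≤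
      ((n + 1 : ℝ) ^ 2 - (1 - α) ^ 2 * z ^ 2) := fun n => by
    nlinarith [mul_nonneg hB2.le (by linarith [hxsq n] : (0:ℝ) ≤ (n + 1 : ℝ) ^ 2 - 1)]
  -- comparison bounds for summability
  have hfle : ∀ n : ℕ, f n ≤ (4 / (3 * (1 - z ^ 2))) * (1 / ((n + 1 : ℝ)) ^ 2) := by
    intro n
    have hsmall : (0:ℝ) < (3 / 4 * (n + 1 : ℝ) ^ 2) * ((1 - z ^ 2) * (n + 1 : ℝ) ^ 2) :=
      mul_pos (by positivity) (mul_pos hden3 (hxp n))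
    have step : f n ≤ ((n + 1 : ℝ) ^ 2) /
        ((3 / 4 * (n + 1 : ℝ) ^ 2) * ((1 - z ^ 2) * (n + 1 : ℝ) ^ 2)) := by
      rw [hfdef]
      exact div_le_div_of_nonneg_left (hxp n).le hsmall
        (mul_le_mul (hb1 n) (hb3 n) (mul_pos hden3 (hxp n)).le (hd1p n).le)
    refine step.trans_eq ?_
    rw [div_mul_div_comm, div_eq_div_iff hsmall.ne' (by positivity)]
    ring
  have hgle : ∀ n : ℕ, g n ≤ (1 / ((1 - (1 - α) ^ 2 * z ^ 2) * (1 - z ^ 2))) *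
      (1 / ((n + 1 : ℝ)) ^ 2) := by
    intro n
    have hsmall : (0:ℝ) < ((1 - (1 - α) ^ 2 * z ^ 2) * (n + 1 : ℝ) ^ 2) *
        ((1 - z ^ 2) * (n + 1 : ℝ) ^ 2) :=
      mul_pos (mul_pos hden2 (hxp n)) (mul_pos hden3 (hxp n))
    have step : g n ≤ ((n + 1 : ℝ) ^ 2) /
        (((1 - (1 - α) ^ 2 * z ^ 2) * (n + 1 : ℝ) ^ 2) * ((1 - z ^ 2) * (n + 1 : ℝ) ^ 2)) := by
      rw [hgdef]
      exact div_le_div_of_nonneg_left (hxp n).le hsmall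
        (mul_le_mul (hb2 n) (hb3 n) (mul_pos hden3 (hxp n)).le (hd2 n).le)
    refine step.trans_eq ?_
    rw [div_mul_div_comm, div_eq_div_iff hsmall.ne'
      (mul_pos (mul_pos hden2 hden3) (hxp n)).ne']
    ring
  have hhle : ∀ n : ℕ, h n ≤ (1 / (1 - (1 - α) ^ 2 * z ^ 2)) * f n := by
    intro n
    have h1 := hd1p n; have h2 := hd2 n; have h3 := hd3 n
    have hmid : (1 - (1 - α) ^ 2 * z ^ 2) ≤ ((n + 1 : ℝ) ^ 2 - (1 - α) ^ 2 * z ^ 2) := by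
      have := hxsq n; linarith
    have hsmall : (0:ℝ) < ((n + 1 : ℝ) ^ 2 - α ^ 2 * z ^ 2) * (1 - (1 - α) ^ 2 * z ^ 2) *
        ((n + 1 : ℝ) ^ 2 - z ^ 2) := mul_pos (mul_pos h1 hden2) h3
    have step : h n ≤ ((n + 1 : ℝ) ^ 2) /
        (((n + 1 : ℝ) ^ 2 - α ^ 2 * z ^ 2) * (1 - (1 - α) ^ 2 * z ^ 2) *
          ((n + 1 : ℝ) ^ 2 - z ^ 2)) := by
      rw [hhdef]
      refine div_le_div_of_nonneg_left (hxp n).le hsmall ?_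
      have := mul_le_mul_of_nonneg_left hmid (mul_pos h1 h3).le
      nlinarith
    refine step.trans_eq ?_
    rw [hfdef]
    simp only
    rw [div_mul_div_comm, div_eq_div_iff hsmall.ne'
      (mul_pos hden2 (mul_pos h1 h3)).ne']
    ring
  -- summability
  have hsq : Summable (fun n : ℕ => 1 / ((n + 1 : ℝ)) ^ 2) := by
    have := (summable_nat_add_iff 1).mpr hasSum_zeta_two.summable
    simpa using this
  have hfsum : Summable f :=
    Summable.of_nonneg_of_le (fun n => (hfpos n).le) hfle (hsq.mul_left _)
  have hgsum : Summable g :=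
    Summable.of_nonneg_of_le (fun n => (hgpos n).le) hgle (hsq.mul_left _)
  have hhsum : Summable h :=
    Summable.of_nonneg_of_le (fun n => (hhpos n).le) hhle (hfsum.mul_left _)
  set A := ∑' n, f n with hAdef
  set B := ∑' n, g n with hBdef
  set C := ∑' n, h n with hCdef
  -- first terms
  have hAf0 : f 0 ≤ A := Summable.le_tsum hfsum 0 (fun i _ => (hfpos i).le)
  have hf0 : f 0 = 1 / ((1 - α ^ 2 * z ^ 2) * (1 - z ^ 2)) := by
    rw [hfdef]; norm_num
  have hg0 : g 0 = 1 / ((1 - (1 - α) ^ 2 * z ^ 2) * (1 - z ^ 2)) := by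
    rw [hgdef]; norm_num
  have hh0 : h 0 = 1 / ((1 - α ^ 2 * z ^ 2) * (1 - (1 - α) ^ 2 * z ^ 2) * (1 - z ^ 2)) := by
    rw [hhdef]; norm_num
  have hA1 : 1 ≤ A := by
    refine le_trans ?_ hAf0
    rw [hf0, le_div_iff₀ (mul_pos hden1 hden3)]
    nlinarith
  -- key head bound: 3/2 ≤ A * (1 - α²z²)
  have hkey : 3 / 2 ≤ A * (1 - α ^ 2 * z ^ 2) := by
    rcases le_or_gt (1/3 : ℝ) (z ^ 2) with hzc | hzc
    · have h1 : 3 / 2 ≤ 1 / (1 - z ^ 2) := by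
        rw [le_div_iff₀ hden3]; nlinarith
      have h2 : f 0 * (1 - α ^ 2 * z ^ 2) = 1 / (1 - z ^ 2) := by
        rw [hf0, div_mul_eq_mul_div, div_eq_div_iff (mul_pos hden1 hden3).ne' hden3.ne']
        ring
      nlinarith [mul_le_mul_of_nonneg_right hAf0 hden1.le]
    · -- z² < 1/3 : use Basel
      have hbase : ∀ n : ℕ, 1 / ((n + 1 : ℝ)) ^ 2 ≤ f n := by
        intro n
        have h1 := hd1p n; have h3 := hd3 n
        have step : ((n + 1 : ℝ) ^ 2) / ((n + 1 : ℝ) ^ 2 * (n + 1 : ℝ) ^ 2) ≤ f n := by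
          rw [hfdef]
          refine div_le_div_of_nonneg_left (hxp n).le (mul_pos h1 h3) ?_
          have e1 : ((n + 1 : ℝ) ^ 2 - α ^ 2 * z ^ 2) ≤ (n + 1 : ℝ) ^ 2 := by nlinarith
          have e3 : ((n + 1 : ℝ) ^ 2 - z ^ 2) ≤ (n + 1 : ℝ) ^ 2 := by nlinarith
          exact mul_le_mul e1 e3 h3.le (hxp n).le
        refine le_trans (le_of_eq ?_) step
        rw [div_eq_div_iff (by positivity) (by positivity)]
        ring
      have hbasel : ∑' n : ℕ, 1 / ((n + 1 : ℝ)) ^ 2 = π ^ 2 / 6 := by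
        have hb := hasSum_zeta_two.tsum_eq
        rw [Summable.tsum_eq_zero_add hasSum_zeta_two.summable] at hb
        simp at hb
        rw [← hb]; norm_num
      have hApi : π ^ 2 / 6 ≤ A := by
        rw [← hbasel]
        exact Summable.tsum_le_tsum hbase hsq hfsum
      have hsmall : α ^ 2 * z ^ 2 < 1 / 12 := by nlinarith
      have h11 : (11:ℝ) / 12 ≤ 1 - α ^ 2 * z ^ 2 := by linarith
      have hπ : (3.141592 : ℝ) < π := Real.pi_gt_d6
      have hπ2 : (108 : ℝ) / 11 < π ^ 2 := by nlinarith
      have := mul_le_mul hApi h11 (by norm_num) (by linarith)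
      nlinarith
  -- head : 3/2 * h 0 ≤ A * g 0
  have hhead : 3 / 2 * h 0 ≤ A * g 0 := by
    have hid : h 0 * (1 - α ^ 2 * z ^ 2) = g 0 := by
      rw [hh0, hg0, div_mul_eq_mul_div,
        div_eq_div_iff (mul_pos (mul_pos hden1 hden2) hden3).ne' (mul_pos hden2 hden3).ne']
      ring
    have h0n : 0 ≤ h 0 := (hhpos 0).le
    calc 3 / 2 * h 0 ≤ (A * (1 - α ^ 2 * z ^ 2)) * h 0 :=
          mul_le_mul_of_nonneg_right hkey h0n
      _ = A * (h 0 * (1 - α ^ 2 * z ^ 2)) := by ring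
      _ = A * g 0 := by rw [hid]
  -- tail : termwise 3/2 * h (n+1) ≤ A * g (n+1)
  have htail : ∀ n : ℕ, 3 / 2 * h (n + 1) ≤ A * g (n + 1) := by
    intro n
    have h1 := hd1p (n + 1); have h2 := hd2 (n + 1); have h3 := hd3 (n + 1)
    have hx2 : (2 : ℝ) ≤ ((n + 1 : ℕ) + 1 : ℝ) := by
      push_cast
      have := n.cast_nonneg (α := ℝ); linarith
    have hd1big : (3 / 2 : ℝ) ≤ (((n + 1 : ℕ) + 1 : ℝ) ^ 2 - α ^ 2 * z ^ 2) := by nlinarith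
    have hid : h (n + 1) * ((((n + 1 : ℕ) + 1 : ℝ)) ^ 2 - α ^ 2 * z ^ 2) = g (n + 1) := by
      rw [hhdef, hgdef]
      simp only
      rw [div_mul_eq_mul_div,
        div_eq_div_iff (mul_pos (mul_pos h1 h2) h3).ne' (mul_pos h2 h3).ne']
      ring
    have hn : 0 ≤ h (n + 1) := (hhpos (n + 1)).le
    calc 3 / 2 * h (n + 1) ≤ ((((n + 1 : ℕ) + 1 : ℝ)) ^ 2 - α ^ 2 * z ^ 2) * h (n + 1) :=
          mul_le_mul_of_nonneg_right hd1big hn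
      _ = g (n + 1) := by rw [← hid]; ring
      _ ≤ A * g (n + 1) := by
          nlinarith [(hgpos (n + 1)).le, hA1]
  -- assemble
  have hgsplit : B = g 0 + ∑' n, g (n + 1) := Summable.tsum_eq_zero_add hgsum
  have hhsplit : C = h 0 + ∑' n, h (n + 1) := Summable.tsum_eq_zero_add hhsum
  have hgsum' : Summable (fun n => g (n + 1)) := (summable_nat_add_iff 1).mpr hgsum
  have hhsum' : Summable (fun n => h (n + 1)) := (summable_nat_add_iff 1).mpr hhsum
  have htsum : ∑' n, (3 / 2 * h (n + 1)) ≤ ∑' n, (A * g (n + 1)) :=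
    Summable.tsum_le_tsum htail (hhsum'.mul_left _) (hgsum'.mul_left _)
  rw [ge_iff_le]
  calc 3 / 2 * C = 3 / 2 * h 0 + ∑' n, (3 / 2 * h (n + 1)) := by
        rw [hhsplit, mul_add, tsum_mul_left]
    _ ≤ A * g 0 + ∑' n, (A * g (n + 1)) := add_le_add hhead htsum
    _ = A * (g 0 + ∑' n, g (n + 1)) := by rw [tsum_mul_left, mul_add]
    _ = A * B := by rw [← hgsplit]
end

section
/- For α ∈ (0,1) and β = 1−α, the functions A_α − A_β and β A_β − α A_α are positive on (0,π) whenever α < 1/2, where A_γ(u) = γ cot(γu) − cot(u). -/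
open Real

noncomputable def Afun (γ u : ℝ) : ℝ := γ * Real.cot (γ * u) - Real.cot u

/-!
Write `β = 1 - α`. Over the common denominator `2 sin(αu) sin(βu)`, the product-to-sum
formulas turn `A_α - A_β = α cot(αu) - β cot(βu)` into `sin((β - α)u) - (β - α) sin u`, positive
by concavity of `sin` on `[0, π]`. Since `β - α = β² - α²`, the second difference is
`β² (cot(βu) - cot u) - α² (cot(αu) - cot u)
  = (β² sin²(αu) - α² sin²(βu)) / (sin(αu) sin(βu) sin u)`,
positive because `sin x / x` decreases on `(0, π]`.
-/

lemma mul_sin_lt_mul_sin {x y : ℝ} (hx : 0 < x) (hxy : x < y) (hy : y ≤ π) :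
    x * sin y < y * sin x := by
  have hslope := strictConcaveOn_sin_Icc.secant_strict_mono (a := 0)
    ⟨le_rfl, pi_pos.le⟩ ⟨hx.le, hxy.le.trans hy⟩ ⟨(hx.trans hxy).le, hy⟩ hx.ne'
    (hx.trans hxy).ne' hxy
  simp only [sin_zero, sub_zero] at hslope
  rwa [div_lt_div_iff₀ (hx.trans hxy) hx, mul_comm (sin y), mul_comm (sin x)] at hslope

lemma cot_sub_cot {x y : ℝ} (hx : sin x ≠ 0) (hy : sin y ≠ 0) :
    cot x - cot y = sin (y - x) / (sin x * sin y) := by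
  rw [cot_eq_cos_div_sin, cot_eq_cos_div_sin, sin_sub]
  field_simp

lemma two_mul_sub_mul_cos_mul_sin (a b u : ℝ) :
    2 * (a * cos (a * u) * sin (b * u) - b * cos (b * u) * sin (a * u)) =
      (a + b) * sin ((b - a) * u) - (b - a) * sin ((a + b) * u) := by
  rw [show (b - a) * u = b * u - a * u by ring, show (a + b) * u = a * u + b * u by ring, sin_sub,
    sin_add]
  ring

lemma Afun_sub_Afun {a b u : ℝ} (ha : sin (a * u) ≠ 0) (hb : sin (b * u) ≠ 0) :
    Afun a u - Afun b u =
      ((a + b) * sin ((b - a) * u) - (b - a) * sin ((a + b) * u)) /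
        (2 * (sin (a * u) * sin (b * u))) := by
  rw [← two_mul_sub_mul_cos_mul_sin, Afun, Afun, sub_sub_sub_cancel_right, cot_eq_cos_div_sin,
    cot_eq_cos_div_sin]
  generalize sin (a * u) = sa at *
  generalize sin (b * u) = sb at *
  field_simp

lemma mul_Afun_sub_mul_Afun {a b u : ℝ} (hab : a + b = 1) :
    b * Afun b u - a * Afun a u =
      b ^ 2 * (cot (b * u) - cot u) - a ^ 2 * (cot (a * u) - cot u) := by
  rw [Afun, Afun]
  linear_combination (b - a) * cot u * hab

lemma sin_mul_pos_of_lt_one {c u : ℝ} (hc : 0 < c) (hc1 : c < 1) (hu : u ∈ Set.Ioo 0 π) :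
    0 < sin (c * u) :=
  sin_pos_of_pos_of_lt_pi (mul_pos hc hu.1)
    ((mul_lt_of_lt_one_left hu.1 hc1).trans hu.2)

section

variable {a b u : ℝ} (ha : 0 < a) (hab : a < b) (hsum : a + b = 1) (hu : u ∈ Set.Ioo 0 π)
include ha hab hsum hu

lemma Afun_sub_Afun_pos : 0 < Afun a u - Afun b u := by
  have hb1 : b < 1 := by linarith
  have hsa := sin_mul_pos_of_lt_one ha (hab.trans hb1) hu
  have hsb := sin_mul_pos_of_lt_one (ha.trans hab) hb1 hu
  rw [Afun_sub_Afun hsa.ne' hsb.ne', hsum, one_mul, one_mul]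
  have hconcave : (b - a) * u * sin u < u * sin ((b - a) * u) :=
    mul_sin_lt_mul_sin (mul_pos (sub_pos.2 hab) hu.1)
      (mul_lt_of_lt_one_left hu.1 (by linarith)) hu.2.le
  rw [mul_right_comm, mul_comm u] at hconcave
  have hnum : 0 < sin ((b - a) * u) - (b - a) * sin u :=
    sub_pos.2 (lt_of_mul_lt_mul_right hconcave hu.1.le)
  positivity

lemma mul_Afun_sub_mul_Afun_pos : 0 < b * Afun b u - a * Afun a u := by
  have hb1 : b < 1 := by linarith
  have hsa := sin_mul_pos_of_lt_one ha (hab.trans hb1) hu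
  have hsb := sin_mul_pos_of_lt_one (ha.trans hab) hb1 hu
  have hs : 0 < sin u := sin_pos_of_pos_of_lt_pi hu.1 hu.2
  have hsinc : a * u * sin (b * u) < b * u * sin (a * u) :=
    mul_sin_lt_mul_sin (mul_pos ha hu.1) (mul_lt_mul_of_pos_right hab hu.1)
      ((mul_lt_of_lt_one_left hu.1 hb1).trans hu.2).le
  rw [mul_right_comm, mul_right_comm b] at hsinc
  have hkey : a * sin (b * u) < b * sin (a * u) := lt_of_mul_lt_mul_right hsinc hu.1.le
  rw [mul_Afun_sub_mul_Afun hsum, cot_sub_cot hsb.ne' hs.ne', cot_sub_cot hsa.ne' hs.ne',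
    show u - b * u = a * u by linear_combination -u * hsum,
    show u - a * u = b * u by linear_combination -u * hsum, sub_pos]
  calc a ^ 2 * (sin (b * u) / (sin (a * u) * sin u))
      = (a * sin (b * u)) ^ 2 / (sin (a * u) * sin (b * u) * sin u) := by field_simp
    _ < (b * sin (a * u)) ^ 2 / (sin (a * u) * sin (b * u) * sin u) := by gcongr
    _ = b ^ 2 * (sin (a * u) / (sin (b * u) * sin u)) := by field_simp

end

theorem Afun_differences_pos (α : ℝ) (hα : α ∈ Set.Ioo (0:ℝ) (1/2)) :
    ∀ u ∈ Set.Ioo 0 Real.pi,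
      0 < Afun α u - Afun (1 - α) u ∧
      0 < (1 - α) * Afun (1 - α) u - α * Afun α u := by
  intro u hu
  have hlt : α < 1 - α := by linarith [hα.2]
  exact ⟨Afun_sub_Afun_pos hα.1 hlt (add_sub_cancel α 1) hu,
    mul_Afun_sub_mul_Afun_pos hα.1 hlt (add_sub_cancel α 1) hu⟩
end

section
/- Let f : (0,∞) → (0,∞) be a probability density such that t ↦ log f(e^t) is concave on ℝ. Then for all x, c > 0 with (x−1)(c−1) ≥ 0, one has f(x) f(c/x) ≥ f(1/x) f(cx). -/
/-!
With `φ = log ∘ f ∘ exp` concave and `a = log x`, `b = log c`, the inequality reads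
`φ(-a) + φ(b + a) ≤ φ(a) + φ(b - a)`. The condition `(x - 1)(c - 1) ≥ 0` says that `a` and `b`
have the same sign, so `a` lies between `-a` and `b + a`: the pair `(a, b - a)` has the same sum
as `(-a, b + a)` but lies inside the interval it spans, and concavity does the rest.
-/

open Real Set

theorem ConcaveOn.add_le_add_of_mem_uIcc {D : Set ℝ} {g : ℝ → ℝ} (hg : ConcaveOn ℝ D g)
    {u v s t : ℝ} (hu : u ∈ D) (hv : v ∈ D) (hs : s ∈ uIcc u v) (hsum : s + t = u + v) :
    g u + g v ≤ g s + g t := by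
  rw [← segment_eq_uIcc] at hs
  obtain ⟨a, b, ha, hb, hab, rfl⟩ := hs
  have ht : t = b • u + a • v := by
    simp only [smul_eq_mul] at hsum ⊢
    linear_combination hsum - (u + v) * hab
  rw [ht]
  have h₁ := hg.2 hu hv ha hb hab
  have h₂ := hg.2 hu hv hb ha (by rw [add_comm, hab])
  simp only [smul_eq_mul] at h₁ h₂ ⊢
  linear_combination h₁ + h₂ - (g u + g v) * hab

theorem mul_le_mul_of_concaveOn_log_comp_exp {f : ℝ → ℝ} (hpos : ∀ x, 0 < x → 0 < f x)
    (hconc : ConcaveOn ℝ univ fun t => log (f (exp t))) {p q r s : ℝ}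
    (hp : 0 < p) (hq : 0 < q) (hr : 0 < r) (hs : 0 < s) (hmem : r ∈ uIcc p q)
    (hprod : r * s = p * q) :
    f p * f q ≤ f r * f s := by
  have hlog_mem : log r ∈ uIcc (log p) (log q) := by
    rcases mem_uIcc.1 hmem with ⟨h₁, h₂⟩ | ⟨h₁, h₂⟩
    · exact mem_uIcc.2 (Or.inl ⟨log_le_log hp h₁, log_le_log hr h₂⟩)
    · exact mem_uIcc.2 (Or.inr ⟨log_le_log hq h₁, log_le_log hr h₂⟩)
  have hlog_sum : log r + log s = log p + log q := by
    rw [← log_mul hr.ne' hs.ne', hprod, log_mul hp.ne' hq.ne']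
  have key := hconc.add_le_add_of_mem_uIcc (mem_univ _) (mem_univ _) hlog_mem hlog_sum
  simp only [exp_log hp, exp_log hq, exp_log hr, exp_log hs] at key
  rwa [← log_mul (hpos p hp).ne' (hpos q hq).ne', ← log_mul (hpos r hr).ne' (hpos s hs).ne',
    log_le_log_iff (mul_pos (hpos p hp) (hpos q hq)) (mul_pos (hpos r hr) (hpos s hs))] at key

theorem HM_subset_P_general (f : ℝ → ℝ)
    (hpos : ∀ x, 0 < x → 0 < f x)
    (hconc : ConcaveOn ℝ Set.univ fun t => Real.log (f (Real.exp t))) :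
    ∀ x c : ℝ, 0 < x → 0 < c → (x - 1) * (c - 1) ≥ 0 →
      f (1 / x) * f (c * x) ≤ f x * f (c / x) := by
  intro x c hx hc hxc
  have hmem : x ∈ uIcc (1 / x) (c * x) := by
    rcases mul_nonneg_iff.1 hxc with ⟨hx₁, hc₁⟩ | ⟨hx₁, hc₁⟩
    · refine mem_uIcc.2 (Or.inl ⟨?_, le_mul_of_one_le_left hx.le (by linarith)⟩)
      rw [div_le_iff₀ hx]; nlinarith
    · refine mem_uIcc.2 (Or.inr ⟨mul_le_of_le_one_left hx.le (by linarith), ?_⟩)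
      rw [le_div_iff₀ hx]; nlinarith
  exact mul_le_mul_of_concaveOn_log_comp_exp hpos hconc (by positivity) (by positivity) hx
    (by positivity) hmem (by field_simp)

theorem HM_subset_P (f : ℝ → ℝ)
    (hpos : ∀ x, 0 < x → 0 < f x)
    (hdens : ∫ x in Set.Ioi (0:ℝ), f x = 1)
    (hconc : ConcaveOn ℝ Set.univ fun t => Real.log (f (Real.exp t))) :
    ∀ x c : ℝ, 0 < x → 0 < c → (x - 1) * (c - 1) ≥ 0 →
      f (1 / x) * f (c * x) ≤ f x * f (c / x) :=
  HM_subset_P_general f hpos hconc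
end

section
/- The function t ↦ log g_α(e^t), where g_α(x) = sin(πα)/(πα(x² + 2cos(πα)x + 1)), is concave on ℝ if and only if α ≤ 1/2. -/
/-!
Writing `c = cos (π α)`, we have `x² + 2 c x + 1 = 2 x (cosh t + c)` for `x = eᵗ`, so
`log g_α(eᵗ)` is an affine function of `t` minus `log (cosh t + c)`. The second derivative of
`log (cosh t + c)` is `(1 + c cosh t) / (cosh t + c)²`, which is nonnegative for all `t` exactly
when `c ≥ 0`, since `cosh` is unbounded; and `c ≥ 0` means `α ≤ 1/2`.
-/

open Real

noncomputable def gDens (α x : ℝ) : ℝ :=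
  Real.sin (Real.pi * α) / (Real.pi * α * (x ^ 2 + 2 * Real.cos (Real.pi * α) * x + 1))

noncomputable def logCoshAdd (c t : ℝ) : ℝ := log (cosh t + c)

section LogCoshAdd

variable {c : ℝ}

lemma cosh_add_pos_of_neg_one_lt (hc : -1 < c) (t : ℝ) : 0 < cosh t + c := by
  linarith [one_le_cosh t]

lemma hasDerivAt_logCoshAdd (hc : -1 < c) (t : ℝ) :
    HasDerivAt (logCoshAdd c) (sinh t / (cosh t + c)) t :=
  ((hasDerivAt_cosh t).add_const c).log (cosh_add_pos_of_neg_one_lt hc t).ne'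

lemma deriv_logCoshAdd (hc : -1 < c) : deriv (logCoshAdd c) = fun t => sinh t / (cosh t + c) :=
  funext fun t => (hasDerivAt_logCoshAdd hc t).deriv

lemma hasDerivAt_sinh_div_cosh_add (hc : -1 < c) (t : ℝ) :
    HasDerivAt (fun t => sinh t / (cosh t + c)) ((1 + c * cosh t) / (cosh t + c) ^ 2) t := by
  refine ((hasDerivAt_sinh t).div ((hasDerivAt_cosh t).add_const c)
    (cosh_add_pos_of_neg_one_lt hc t).ne').congr_deriv ?_
  rw [← cosh_sq_sub_sinh_sq t]
  ring

lemma deriv2_logCoshAdd (hc : -1 < c) (t : ℝ) :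
    deriv^[2] (logCoshAdd c) t = (1 + c * cosh t) / (cosh t + c) ^ 2 := by
  change deriv (deriv (logCoshAdd c)) t = _
  rw [deriv_logCoshAdd hc, (hasDerivAt_sinh_div_cosh_add hc t).deriv]

lemma convexOn_logCoshAdd (hc : 0 ≤ c) : ConvexOn ℝ Set.univ (logCoshAdd c) := by
  have hc' : -1 < c := by linarith
  refine convexOn_univ_of_deriv2_nonneg (fun t => (hasDerivAt_logCoshAdd hc' t).differentiableAt)
    ?_ fun t => ?_
  · rw [deriv_logCoshAdd hc']
    exact fun t => (hasDerivAt_sinh_div_cosh_add hc' t).differentiableAt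
  · rw [deriv2_logCoshAdd hc']
    have := cosh_pos t
    positivity

lemma strictConcaveOn_logCoshAdd (hc₁ : -1 < c) (hc₀ : c < 0) :
    StrictConcaveOn ℝ (Set.Ici (log (-2 / c))) (logCoshAdd c) := by
  refine strictConcaveOn_of_deriv2_neg (convex_Ici _)
    (fun t _ => (hasDerivAt_logCoshAdd hc₁ t).continuousAt.continuousWithinAt) fun t ht => ?_
  rw [interior_Ici, Set.mem_Ioi, log_lt_iff_lt_exp (div_pos_of_neg_of_neg (by norm_num) hc₀)] at ht
  -- for `t > log (-2 / c)`: `cosh t > eᵗ / 2 > -1 / c`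
  have hcosh : exp t / 2 < cosh t := by
    rw [cosh_eq]
    linarith [exp_pos (-t)]
  have hneg : 1 + c * cosh t < 0 := by
    have : c * exp t < -2 := by rwa [div_lt_iff_of_neg hc₀, mul_comm] at ht
    nlinarith
  rw [deriv2_logCoshAdd hc₁]
  exact div_neg_of_neg_of_pos hneg (pow_pos (cosh_add_pos_of_neg_one_lt hc₁ t) 2)

lemma not_convexOn_logCoshAdd (hc₁ : -1 < c) (hc₀ : c < 0) :
    ¬ ConvexOn ℝ Set.univ (logCoshAdd c) := by
  intro hconv
  set T := log (-2 / c)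
  have hlt := (strictConcaveOn_logCoshAdd hc₁ hc₀).2 (Set.self_mem_Ici (a := T))
    (show T + 1 ∈ Set.Ici T by simp) (by linarith) one_half_pos one_half_pos (by norm_num)
  have hle := hconv.2 (Set.mem_univ T) (Set.mem_univ (T + 1)) one_half_pos.le one_half_pos.le
    (by norm_num)
  exact (hlt.trans_le hle).false

lemma convexOn_logCoshAdd_iff (hc : -1 < c) :
    ConvexOn ℝ Set.univ (logCoshAdd c) ↔ 0 ≤ c :=
  ⟨fun h => not_lt.1 fun hc₀ => not_convexOn_logCoshAdd hc hc₀ h, convexOn_logCoshAdd⟩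

end LogCoshAdd

lemma concaveOn_const_sub_sub_iff {s : Set ℝ} (hs : Convex ℝ s) (a : ℝ) {f : ℝ → ℝ} :
    ConcaveOn ℝ s (fun t => a - t - f t) ↔ ConvexOn ℝ s f := by
  have hconv : ConvexOn ℝ s (fun t => a - t) := (convexOn_const a hs).sub (concaveOn_id hs)
  have hconc : ConcaveOn ℝ s (fun t => a - t) := (concaveOn_const a hs).sub (convexOn_id hs)
  refine ⟨fun h => ?_, fun h => hconc.sub h⟩
  have hf : f = (fun t => a - t) - fun t => a - t - f t := by
    ext t
    simp
  exact hf ▸ hconv.sub h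

lemma neg_one_lt_cos_pi_mul {α : ℝ} (hα : α ∈ Set.Ioo (0 : ℝ) 1) : -1 < cos (π * α) := by
  refine (neg_one_le_cos _).lt_of_ne fun h => ?_
  nlinarith [sin_sq_add_cos_sq (π * α), sin_pos_of_pos_of_lt_pi (mul_pos pi_pos hα.1)
    (by nlinarith [pi_pos, hα.2] : π * α < π)]

lemma log_gDens_exp {α : ℝ} (hα : α ∈ Set.Ioo (0 : ℝ) 1) (t : ℝ) :
    log (gDens α (exp t)) = log (sin (π * α) / (2 * π * α)) - t - logCoshAdd (cos (π * α)) t := by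
  have hπα : 0 < π * α := mul_pos pi_pos hα.1
  have hsin : 0 < sin (π * α) := sin_pos_of_pos_of_lt_pi hπα (by nlinarith [pi_pos, hα.2])
  have hden : exp t ^ 2 + 2 * cos (π * α) * exp t + 1 = 2 * exp t * (cosh t + cos (π * α)) := by
    rw [cosh_eq, exp_neg]
    field_simp
    ring
  have hpos := cosh_add_pos_of_neg_one_lt (neg_one_lt_cos_pi_mul hα) t
  have hsplit : sin (π * α) / (π * α * (2 * exp t * (cosh t + cos (π * α))))
      = sin (π * α) / (2 * π * α) / exp t / (cosh t + cos (π * α)) := by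
    field_simp
  have hconst : 0 < sin (π * α) / (2 * π * α) := by
    rw [mul_assoc]
    positivity
  rw [gDens, hden, hsplit, log_div (div_pos hconst (exp_pos t)).ne' hpos.ne',
    log_div hconst.ne' (exp_pos t).ne', log_exp, logCoshAdd]

lemma cos_pi_mul_nonneg_iff {α : ℝ} (hα : α ∈ Set.Ioo (0 : ℝ) 1) :
    0 ≤ cos (π * α) ↔ α ≤ 1 / 2 := by
  have hπ := pi_pos
  constructor
  · refine fun h => not_lt.1 fun hα' => (cos_neg_of_pi_div_two_lt_of_lt ?_ ?_).not_ge h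
    all_goals nlinarith [hα.2]
  · exact fun h => cos_nonneg_of_mem_Icc ⟨by nlinarith [hα.1], by nlinarith⟩

theorem gDens_logconcave_iff (α : ℝ) (hα : α ∈ Set.Ioo (0:ℝ) 1) :
    ConcaveOn ℝ Set.univ (fun t => Real.log (gDens α (Real.exp t))) ↔ α ≤ 1/2 := by
  rw [funext (log_gDens_exp hα), concaveOn_const_sub_sub_iff convex_univ,
    convexOn_logCoshAdd_iff (neg_one_lt_cos_pi_mul hα), cos_pi_mul_nonneg_iff hα]
end

section
/- For every α ∈ (0,1) with β = 1−α, the function g_α(x) = e^{-x}/(1−e^{-x}) − e^{-x/α}/(1−e^{-x/α}) − e^{-x/β}/(1−e^{-x/β}) satisfies g_α(x) = x ∫_1^∞ e^{-tx} ([t] − [αt] − [βt]) dt for every x > 0, where [·] denotes the integer part. -/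
/-!
Since `⌊c t⌋ = ∑_{k ≥ 1} 1[t ≥ k / c]` for `c, t > 0`, integrating termwise (the Fubini form of the
integration by parts against `∑_{k ≥ 1} δ_{k/c}`) gives
`∫_0^∞ e^{-tx} ⌊c t⌋ dt = ∑_{k ≥ 1} e^{-kx/c} / x = e^{-x/c} / ((1 - e^{-x/c}) x)`.
For `c ≤ 1` the integrand vanishes on `(0, 1)`, so the integral may be taken over `(1, ∞)`;
the theorem is the difference of the cases `c = 1`, `c = α` and `c = 1 - α`.
-/

open MeasureTheory Set Real

lemma natFloor_mul_eq_tsum_indicator {c : ℝ} (hc : 0 < c) (t : ℝ) :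
    (⌊c * t⌋₊ : ℝ) = ∑' k : ℕ, (Ici (((k : ℝ) + 1) / c)).indicator 1 t := by
  have hmem (k : ℕ) : t ∈ Ici (((k : ℝ) + 1) / c) ↔ k ∈ Finset.range ⌊c * t⌋₊ := by
    rw [mem_Ici, div_le_iff₀' hc, Finset.mem_range, Nat.lt_iff_add_one_le,
      Nat.le_floor_iff' k.succ_ne_zero, Nat.cast_succ]
  rw [tsum_eq_sum (s := Finset.range ⌊c * t⌋₊) fun k hk => by simp [hmem, hk],
    Finset.sum_congr rfl fun k hk => indicator_of_mem ((hmem k).2 hk) 1]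
  simp

lemma integrableOn_Ioi_exp_mul_floor {x c : ℝ} (hx : 0 < x) (hc : 0 ≤ c) :
    IntegrableOn (fun t => exp (-t * x) * ⌊c * t⌋) (Ioi 0) := by
  have hdom : IntegrableOn (fun t => c * (t ^ (1 : ℝ) * exp (-x * t ^ (1 : ℝ)))) (Ioi 0) :=
    (integrableOn_rpow_mul_exp_neg_mul_rpow (by norm_num) one_pos hx).const_mul c
  have hmeas : Measurable fun t => exp (-t * x) * ⌊c * t⌋ :=
    (by fun_prop : Measurable fun t => exp (-t * x)).mul
      (measurable_from_top.comp (measurable_id.const_mul c).floor)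
  refine hdom.mono' hmeas.aestronglyMeasurable ?_
  filter_upwards [ae_restrict_mem measurableSet_Ioi] with t (ht : 0 < t)
  have hfloor : (0 : ℝ) ≤ ⌊c * t⌋ := by exact_mod_cast Int.floor_nonneg.2 (by positivity)
  rw [norm_mul, norm_of_nonneg (exp_pos _).le, norm_of_nonneg hfloor, rpow_one,
    show -t * x = -x * t by ring]
  linarith [mul_le_mul_of_nonneg_left (Int.floor_le (c * t)) (exp_pos (-x * t)).le]

theorem integral_Ioi_exp_mul_floor {x c : ℝ} (hx : 0 < x) (hc : 0 < c) :
    ∫ t in Ioi 0, exp (-t * x) * ⌊c * t⌋ = exp (-x / c) / (1 - exp (-x / c)) / x := by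
  set r := exp (-x / c)
  set F : ℕ → ℝ → ℝ := fun k => (Ici (((k : ℝ) + 1) / c)).indicator fun t => exp (-x * t)
  have hF_norm (k : ℕ) (t : ℝ) : ‖F k t‖ = F k t :=
    norm_of_nonneg (indicator_nonneg (fun _ _ => (exp_pos _).le) t)
  have hF_int (k : ℕ) : IntegrableOn (F k) (Ioi 0) :=
    (exp_neg_integrableOn_Ioi 0 hx).indicator measurableSet_Ici
  have hF_integral (k : ℕ) : ∫ t in Ioi 0, F k t = r ^ (k + 1) / x := by
    rw [setIntegral_indicator measurableSet_Ici,
      inter_eq_right.2 (Ici_subset_Ioi.2 (by positivity)), integral_Ici_eq_integral_Ioi,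
      integral_exp_mul_Ioi (neg_neg_of_pos hx), neg_div_neg_eq, ← exp_nat_mul]
    congr 2
    field_simp
    push_cast
    ring
  have hF_sum : ∫ t in Ioi 0, exp (-t * x) * ⌊c * t⌋ = ∫ t in Ioi 0, ∑' k, F k t := by
    refine setIntegral_congr_fun measurableSet_Ioi fun t (ht : 0 < t) => ?_
    rw [← natCast_floor_eq_intCast_floor (by positivity), natFloor_mul_eq_tsum_indicator hc,
      ← tsum_mul_left]
    refine tsum_congr fun k => ?_
    simp only [F, indicator_apply, Pi.one_apply, mul_ite, mul_one, mul_zero, neg_mul, mul_comm x]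
  have hr : r < 1 := exp_lt_one_iff.2 (by simp only [neg_div, neg_lt_zero]; positivity)
  have hsummable : Summable fun k => ∫ t in Ioi 0, ‖F k t‖ := by
    simp_rw [hF_norm, hF_integral]
    exact ((summable_nat_add_iff 1).2 (summable_geometric_of_lt_one (exp_pos _).le hr)).div_const x
  rw [hF_sum, ← integral_tsum_of_summable_integral_norm hF_int hsummable]
  simp_rw [hF_integral, tsum_div_const, pow_succ]
  rw [tsum_mul_right, tsum_geometric_of_lt_one (exp_pos _).le hr]
  ring

lemma setIntegral_Ioi_one_mul_floor_eq_Ioi_zero (f : ℝ → ℝ) {c : ℝ} (hc₀ : 0 ≤ c) (hc₁ : c ≤ 1) :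
    ∫ t in Ioi 1, f t * ⌊c * t⌋ = ∫ t in Ioi 0, f t * ⌊c * t⌋ := by
  rw [← integral_Ici_eq_integral_Ioi, setIntegral_eq_of_subset_of_forall_sdiff_eq_zero
    measurableSet_Ioi (Ici_subset_Ioi.2 one_pos)]
  rintro t ⟨ht₀ : 0 < t, ht₁ : ¬1 ≤ t⟩
  have hct : c * t ∈ Ico 0 1 := ⟨by positivity, by nlinarith [not_le.1 ht₁]⟩
  rw [Int.floor_eq_zero_iff.2 hct, Int.cast_zero, mul_zero]

lemma mul_setIntegral_Ioi_one_exp_mul_floor {x c : ℝ} (hx : 0 < x) (hc₀ : 0 < c) (hc₁ : c ≤ 1) :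
    x * ∫ t in Ioi 1, exp (-t * x) * ⌊c * t⌋ = exp (-x / c) / (1 - exp (-x / c)) := by
  rw [setIntegral_Ioi_one_mul_floor_eq_Ioi_zero _ hc₀.le hc₁, integral_Ioi_exp_mul_floor hx hc₀]
  field_simp

theorem levy_density_representation (α : ℝ) (hα : α ∈ Set.Ioo (0:ℝ) 1) (x : ℝ) (hx : 0 < x) :
    Real.exp (-x) / (1 - Real.exp (-x)) -
      Real.exp (-x / α) / (1 - Real.exp (-x / α)) -
      Real.exp (-x / (1 - α)) / (1 - Real.exp (-x / (1 - α))) =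
    x * ∫ t in Set.Ioi (1:ℝ),
      Real.exp (-t * x) * ((⌊t⌋ : ℝ) - (⌊α * t⌋ : ℝ) - (⌊(1 - α) * t⌋ : ℝ)) := by
  obtain ⟨hα₀, hα₁⟩ := hα
  have hint {c : ℝ} (hc : 0 ≤ c) : IntegrableOn (fun t => exp (-t * x) * ⌊c * t⌋) (Ioi 1) :=
    (integrableOn_Ioi_exp_mul_floor hx hc).mono_set (Ioi_subset_Ioi zero_le_one)
  have hsplit : ∫ t in Ioi 1, exp (-t * x) * ((⌊t⌋ : ℝ) - ⌊α * t⌋ - ⌊(1 - α) * t⌋) =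
      (∫ t in Ioi 1, exp (-t * x) * ⌊1 * t⌋) - (∫ t in Ioi 1, exp (-t * x) * ⌊α * t⌋) -
        ∫ t in Ioi 1, exp (-t * x) * ⌊(1 - α) * t⌋ := by
    rw [← integral_sub (hint zero_le_one) (hint hα₀.le),
      ← integral_sub ?_ (hint (by linarith))]
    · simp only [one_mul, mul_sub]
    · exact (hint zero_le_one).sub (hint hα₀.le)
  rw [hsplit, mul_sub, mul_sub, mul_setIntegral_Ioi_one_exp_mul_floor hx one_pos le_rfl,
    mul_setIntegral_Ioi_one_exp_mul_floor hx hα₀ hα₁.le,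
    mul_setIntegral_Ioi_one_exp_mul_floor hx (by linarith) (by linarith), div_one]
end

section
/- For every α ∈ (0,1), ∫_0^∞ ( e^{-x}/(1−e^{-x}) − e^{-x/α}/(1−e^{-x/α}) − e^{-x/(1−α)}/(1−e^{-x/(1−α)}) ) dx = −(α log α + (1−α) log(1−α)). -/
/-!
With `Λ(y) = log ((1 - e^{-y}) / y)` and `β = 1 - α`, the integrand is the derivative of
`F(x) = Λ(x) - α Λ(x/α) - β Λ(x/β)`: each `c Λ(x/c)` has derivative `1/(e^{x/c} - 1) - c/x`, and
the `1/x` terms cancel because `α + β = 1`. Since `(1 - e^{-y}) / y → 1` at `0⁺`, `F(0⁺) = 0`;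
since `Λ(y) + log y → 0` at `∞`, `F(∞) = -(α log α + β log β)`. The integrand is nonnegative
because `y / (e^y - 1)` is decreasing (convexity of `exp`), so the fundamental theorem of calculus
on `(0, ∞)` applies without a separate integrability argument.
-/

open Real Filter Topology Set MeasureTheory

lemma exp_neg_div_one_sub_exp_neg (y : ℝ) : exp (-y) / (1 - exp (-y)) = (exp y - 1)⁻¹ := by
  rw [exp_neg, div_eq_mul_inv, ← mul_inv, mul_sub, mul_one, mul_inv_cancel₀ (exp_pos y).ne']

lemma inv_exp_div_sub_one_le {x c : ℝ} (hx : 0 < x) (hc₀ : 0 < c) (hc₁ : c ≤ 1) :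
    (exp (x / c) - 1)⁻¹ ≤ c * (exp x - 1)⁻¹ := by
  have hxc : x ≤ x / c := by rw [le_div_iff₀ hc₀]; exact mul_le_of_le_one_right hx.le hc₁
  -- `(e^y - 1) / y` is the slope of a secant of `exp` through `0`
  have hslope : (exp x - 1) / x ≤ (exp (x / c) - 1) / (x / c) := by
    simpa using convexOn_exp.secant_mono (a := 0) trivial trivial trivial hx.ne'
      (by positivity) hxc
  rw [div_div_eq_mul_div, mul_comm, div_le_div_iff_of_pos_right hx] at hslope
  have hpos : 0 < exp x - 1 := by linarith [add_one_lt_exp hx.ne']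
  have hpos' : 0 < exp (x / c) - 1 := by linarith [add_one_lt_exp (by positivity : x / c ≠ 0)]
  rw [← div_eq_mul_inv, inv_eq_one_div, div_le_div_iff₀ hpos' hpos]
  linarith

/-- At `y = 0` this is `log (0 / 0) = 0`, which is also its limit from the right. -/
noncomputable def logOneSubExpNegDiv (y : ℝ) : ℝ := log ((1 - exp (-y)) / y)

local notation "L" => logOneSubExpNegDiv

lemma hasDerivAt_logOneSubExpNegDiv {y : ℝ} (hy : 0 < y) :
    HasDerivAt L ((exp y - 1)⁻¹ - y⁻¹) y := by
  have hne : 1 - exp (-y) ≠ 0 := by linarith [exp_lt_one_iff.2 (neg_lt_zero.2 hy)]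
  have h1 : HasDerivAt (fun t => 1 - exp (-t)) (exp (-y)) y := by
    simpa using (hasDerivAt_neg y).exp.const_sub 1
  refine ((h1.div (hasDerivAt_id' y) hy.ne').log (div_ne_zero hne hy.ne')).congr_deriv ?_
  rw [← exp_neg_div_one_sub_exp_neg, Pi.div_apply]
  field_simp

lemma tendsto_logOneSubExpNegDiv_nhdsGT_zero : Tendsto L (𝓝[>] 0) (𝓝 0) := by
  have h := ((hasDerivAt_neg (0:ℝ)).exp.const_sub 1).tendsto_slope_zero_right
  simp only [zero_add, neg_zero, exp_zero, sub_self, sub_zero, smul_eq_mul, neg_neg, mul_neg,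
    mul_one] at h
  show Tendsto (fun y => log ((1 - exp (-y)) / y)) _ _
  simpa [Function.comp_def, div_eq_inv_mul] using (continuousAt_log one_ne_zero).tendsto.comp h

lemma tendsto_logOneSubExpNegDiv_add_log_atTop : Tendsto (fun y => L y + log y) atTop (𝓝 0) := by
  have h : Tendsto (fun y => 1 - exp (-y)) atTop (𝓝 1) := by
    simpa using (tendsto_exp_neg_atTop_nhds_zero).const_sub 1
  have hlog := (continuousAt_log one_ne_zero).tendsto.comp h
  rw [log_one] at hlog
  refine hlog.congr' ?_
  filter_upwards [eventually_gt_atTop 0] with y hy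
  have hne : 1 - exp (-y) ≠ 0 := by linarith [exp_lt_one_iff.2 (neg_lt_zero.2 hy)]
  simp [logOneSubExpNegDiv, log_div hne hy.ne']

section Scaled

variable {c : ℝ}

lemma hasDerivAt_mul_logOneSubExpNegDiv_div {x : ℝ} (hc : 0 < c) (hx : 0 < x) :
    HasDerivAt (fun x => c * L (x / c)) ((exp (x / c) - 1)⁻¹ - c / x) x := by
  refine (((hasDerivAt_logOneSubExpNegDiv (div_pos hx hc)).comp x
    ((hasDerivAt_id x).div_const c)).const_mul c).congr_deriv ?_
  field_simp

lemma continuousWithinAt_mul_logOneSubExpNegDiv_div (hc : 0 < c) :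
    ContinuousWithinAt (fun x => c * L (x / c)) (Ici 0) 0 := by
  rw [← continuousWithinAt_Ioi_iff_Ici, ContinuousWithinAt]
  have hdiv : Tendsto (fun x => x / c) (𝓝[>] 0) (𝓝[>] 0) := by
    refine tendsto_nhdsWithin_iff.2
      ⟨?_, eventually_nhdsWithin_of_forall fun x hx => div_pos hx hc⟩
    simpa using ((continuous_id.div_const c).tendsto 0).mono_left nhdsWithin_le_nhds
  simpa [logOneSubExpNegDiv] using (tendsto_logOneSubExpNegDiv_nhdsGT_zero.comp hdiv).const_mul c

lemma tendsto_mul_logOneSubExpNegDiv_div_add_mul_log_atTop (hc : 0 < c) :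
    Tendsto (fun x => c * L (x / c) + c * log x) atTop (𝓝 (c * log c)) := by
  have h := (tendsto_logOneSubExpNegDiv_add_log_atTop.comp
    (tendsto_id.atTop_div_const hc)).const_mul c
  refine (h.add_const (c * log c)).congr' ?_ |>.mono_right (by simp)
  filter_upwards [eventually_gt_atTop 0] with x hx
  simp [log_div hx.ne' hc.ne']
  ring

end Scaled

noncomputable def entropyPrimitive (α x : ℝ) : ℝ :=
  L x - α * L (x / α) - (1 - α) * L (x / (1 - α))

lemma entropyPrimitive_zero (α : ℝ) : entropyPrimitive α 0 = 0 := by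
  simp [entropyPrimitive, logOneSubExpNegDiv]

section EntropyPrimitive

variable {α : ℝ}

lemma hasDerivAt_entropyPrimitive (hα : α ∈ Ioo 0 1) {x : ℝ} (hx : 0 < x) :
    HasDerivAt (entropyPrimitive α)
      ((exp x - 1)⁻¹ - (exp (x / α) - 1)⁻¹ - (exp (x / (1 - α)) - 1)⁻¹) x := by
  have h₁ := hasDerivAt_mul_logOneSubExpNegDiv_div one_pos hx
  have h₂ := hasDerivAt_mul_logOneSubExpNegDiv_div hα.1 hx
  have h₃ := hasDerivAt_mul_logOneSubExpNegDiv_div (sub_pos.2 hα.2) hx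
  simp only [one_mul, div_one] at h₁
  refine ((h₁.sub h₂).sub h₃).congr_deriv ?_
  ring

lemma continuousWithinAt_entropyPrimitive (hα : α ∈ Ioo 0 1) :
    ContinuousWithinAt (entropyPrimitive α) (Ici 0) 0 := by
  have h₁ := continuousWithinAt_mul_logOneSubExpNegDiv_div one_pos
  simp only [one_mul, div_one] at h₁
  exact (h₁.sub (continuousWithinAt_mul_logOneSubExpNegDiv_div hα.1)).sub
    (continuousWithinAt_mul_logOneSubExpNegDiv_div (sub_pos.2 hα.2))

lemma tendsto_entropyPrimitive_atTop (hα : α ∈ Ioo 0 1) :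
    Tendsto (entropyPrimitive α) atTop
      (𝓝 (-(α * log α + (1 - α) * log (1 - α)))) := by
  have h₁ := tendsto_mul_logOneSubExpNegDiv_div_add_mul_log_atTop one_pos
  have h₂ := tendsto_mul_logOneSubExpNegDiv_div_add_mul_log_atTop hα.1
  have h₃ := tendsto_mul_logOneSubExpNegDiv_div_add_mul_log_atTop (sub_pos.2 hα.2)
  simp only [one_mul, div_one, log_one] at h₁
  have h : Tendsto (entropyPrimitive α) atTop (𝓝 (0 - α * log α - (1 - α) * log (1 - α))) :=
    ((h₁.sub h₂).sub h₃).congr fun x => by simp only [entropyPrimitive]; ring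
  rwa [zero_sub, sub_eq_add_neg, ← neg_add] at h

lemma inv_exp_sub_one_sub_inv_exp_div_sub_one_nonneg (hα : α ∈ Ioo 0 1) {x : ℝ} (hx : 0 < x) :
    0 ≤ (exp x - 1)⁻¹ - (exp (x / α) - 1)⁻¹ - (exp (x / (1 - α)) - 1)⁻¹ := by
  have h₂ := inv_exp_div_sub_one_le hx hα.1 hα.2.le
  have h₃ := inv_exp_div_sub_one_le hx (sub_pos.2 hα.2) (sub_le_self 1 hα.1.le)
  linarith

end EntropyPrimitive

theorem entropy_integral (α : ℝ) (hα : α ∈ Set.Ioo (0:ℝ) 1) :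
    ∫ x in Set.Ioi (0:ℝ),
        (Real.exp (-x) / (1 - Real.exp (-x)) -
         Real.exp (-x / α) / (1 - Real.exp (-x / α)) -
         Real.exp (-x / (1 - α)) / (1 - Real.exp (-x / (1 - α)))) =
      -(α * Real.log α + (1 - α) * Real.log (1 - α)) := by
  simp only [neg_div, exp_neg_div_one_sub_exp_neg]
  rw [integral_Ioi_of_hasDerivAt_of_nonneg (continuousWithinAt_entropyPrimitive hα)
    (fun x hx => hasDerivAt_entropyPrimitive hα hx)
    (fun x hx => inv_exp_sub_one_sub_inv_exp_div_sub_one_nonneg hα hx)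
    (tendsto_entropyPrimitive_atTop hα), entropyPrimitive_zero, sub_zero]
end
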